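/- arXiv:1704.00463 — 4 statements merged into one kernel-verified Lean document; each statement's English description precedes it below -/
import Mathlib

section
/- Let t_1, ..., t_{n+1} be complex numbers with t_1 t_2 ⋯ t_{n+1} = 1, and define h_m = Σ_j t_j^m for m ∈ ℤ. Let H_n be the (n+1)×(n+1) matrix with (j,k)-entry h_{j-k} (indices 0 ≤ j,k ≤ n). Then det H_n = (-1)^{n(n+1)/2} · Π_{1 ≤ j < k ≤ n+1} (t_j - t_k)². -/
open Finset Matrix

private lemma swapIoi {M : Type*} [CommMonoid M] {n : ℕ} (f : Fin n → M) :
    ∏ i, ∏ j ∈ Ioi i, f j = ∏ j, f j ^ (j : ℕ) := by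
  rw [Finset.prod_comm' (t' := Finset.univ) (s' := fun j => Iio j)
    (by simp [Finset.mem_Ioi, Finset.mem_Iio, and_comm])]
  simp [Finset.prod_const, Fin.card_Iio]

/-- For `t₁ ⋯ t_{n+1} = 1` and power sums `h_m = Σ t_j^m` (`m ∈ ℤ`), the matrix
`H_n = (h_{j-k})` satisfies `det H_n = (-1)^{n(n+1)/2} Π_{j<k} (t_j - t_k)²`. -/
theorem stmt11 (n : ℕ) (t : Fin (n + 1) → ℂ) (ht : ∏ j, t j = 1) :
    (Matrix.of fun j k : Fin (n + 1) => ∑ l, t l ^ ((j : ℤ) - (k : ℤ))).det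
      = (-1 : ℂ) ^ (n * (n + 1) / 2) *
          ∏ j : Fin (n + 1), ∏ k ∈ Finset.Ioi j, (t j - t k) ^ 2 := by
  have htne : ∀ l, t l ≠ 0 := by
    intro l hl
    rw [Finset.prod_eq_zero (Finset.mem_univ l) hl] at ht
    exact one_ne_zero ht.symm
  have key : (Matrix.of fun j k : Fin (n + 1) => ∑ l, t l ^ ((j : ℤ) - (k : ℤ)))
      = (Matrix.vandermonde t)ᵀ * (Matrix.vandermonde fun l => (t l)⁻¹) := by
    ext j k
    simp only [Matrix.of_apply, Matrix.mul_apply, Matrix.transpose_apply, Matrix.vandermonde]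
    refine Finset.sum_congr rfl fun l _ => ?_
    rw [sub_eq_add_neg, zpow_add₀ (htne l), inv_pow, ← zpow_natCast (t l) (j : ℕ),
      ← zpow_natCast (t l) (k : ℕ), ← _root_.zpow_neg]
  rw [key, Matrix.det_mul, Matrix.det_transpose, Matrix.det_vandermonde,
    Matrix.det_vandermonde]
  rw [← Finset.prod_mul_distrib]
  have pairEq : ∀ i : Fin (n + 1),
      (∏ j ∈ Ioi i, (t j - t i)) * ∏ j ∈ Ioi i, ((t j)⁻¹ - (t i)⁻¹)
        = ∏ j ∈ Ioi i, ((-1) * (t i - t j) ^ 2 * ((t i)⁻¹ * (t j)⁻¹)) := by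
    intro i
    rw [← Finset.prod_mul_distrib]
    refine Finset.prod_congr rfl fun j _ => ?_
    field_simp [htne i, htne j]
    ring
  simp only [pairEq]
  simp only [Finset.prod_mul_distrib]
  have h1 : ∏ i : Fin (n + 1), ∏ _j ∈ Ioi i, (-1 : ℂ) = (-1 : ℂ) ^ (n * (n + 1) / 2) := by
    rw [swapIoi (fun _ : Fin (n + 1) => (-1 : ℂ)), Finset.prod_pow_eq_pow_sum]
    congr 1
    rw [Fin.sum_univ_eq_sum_range (fun i => i), Finset.sum_range_id]
    simp [Nat.mul_comm]
  have h3 : (∏ i : Fin (n + 1), ∏ _j ∈ Ioi i, (t i)⁻¹)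
      * ∏ i : Fin (n + 1), ∏ j ∈ Ioi i, (t j)⁻¹ = 1 := by
    rw [swapIoi (fun j => (t j)⁻¹)]
    simp only [Finset.prod_const, Fin.card_Ioi]
    rw [← Finset.prod_mul_distrib]
    have comb : ∀ i : Fin (n + 1),
        (t i)⁻¹ ^ (n + 1 - 1 - (i : ℕ)) * (t i)⁻¹ ^ (i : ℕ) = ((t i) ^ n)⁻¹ := by
      intro i
      rw [← pow_add, inv_pow]
      congr 2
      have := i.is_lt
      omega
    simp only [comb]
    rw [Finset.prod_inv_distrib, Finset.prod_pow, ht, one_pow, inv_one]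
  rw [h1, h3, mul_one]
end

section
/- Let f̃(T,U) = Π_{j=1}^{n+1}(T - t_j U) with t_1⋯t_{n+1} = 1 and conjugate-symmetric coefficients (so f̃ ∈ MA_n), and let g̃(X,Y) = f̃(i(X+iY), i(X-iY)) = Σ_{j} c_j X^{n+1-j} Y^j with c_0 ≠ 0. Define Dis(g̃(X,1)) = c_0^{2n} Π_{j<k}(x_j - x_k)² where x_1, ..., x_{n+1} are the roots of g̃(X,1), and let H_n be the matrix with entries h_{j-k} where h_m = Σ_j t_j^m. Then Dis(g̃(X,1)) = 2^{n(n+1)} · det H_n. -/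
/-!
Both sides are computed in terms of the `tⱼ`. Each factor of `g̃(X,1)` is a linear form
`aⱼ X - bⱼ` with `aⱼ = i(1 - tⱼ)` and `bⱼ = 1 + tⱼ`, so `c₀ = Π aⱼ` and the roots are `bⱼ / aⱼ`.
Since the discriminant only depends on the multiset of roots and `c₀^{2n} = Π_{j<k} (aⱼ aₖ)²`,
`Dis(g̃(X,1)) = Π_{j<k} (aₖ bⱼ - aⱼ bₖ)² = Π_{j<k} (2i(tⱼ - tₖ))²`. On the other side
`H_n = V(t)ᵀ V(t⁻¹)` for the Vandermonde matrices `V`, so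
`det H_n = Π_{j<k} (tₖ - tⱼ)(tₖ⁻¹ - tⱼ⁻¹) = Π_{j<k} -(tⱼ - tₖ)²` because `Π tⱼ = 1`.
-/

open Complex Finset Matrix Polynomial

section PairProducts

variable {M : Type*} [CommMonoid M] {n : ℕ}

theorem prod_prod_Ioi_mul_eq_pow (g : Fin (n + 1) → M) :
    ∏ j, ∏ k ∈ Ioi j, (g j * g k) = (∏ j, g j) ^ n := by
  have hswap :
      ∏ j : Fin (n + 1), ∏ k ∈ Ioi j, g k = ∏ k : Fin (n + 1), ∏ _j ∈ Iio k, g k :=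
    prod_comm' fun j k => by simp
  calc ∏ j, ∏ k ∈ Ioi j, (g j * g k)
      = (∏ j, ∏ _k ∈ Ioi j, g j) * ∏ j, ∏ k ∈ Ioi j, g k := by
        simp only [prod_mul_distrib]
    _ = ∏ j, (g j ^ (n - (j : ℕ)) * g j ^ (j : ℕ)) := by
        simp only [hswap, ← prod_mul_distrib, prod_const, Fin.card_Ioi, Fin.card_Iio,
          add_tsub_cancel_right]
    _ = (∏ j, g j) ^ n := by
        rw [← prod_pow]
        exact prod_congr rfl fun j _ => by rw [← pow_add, Nat.sub_add_cancel (Fin.is_le j)]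

end PairProducts

section Discriminant

variable {R : Type*} [CommRing R] {m : ℕ}

theorem prod_prod_Ioi_sub_sq_eq_det (x : Fin m → R) :
    ∏ j, ∏ k ∈ Ioi j, (x j - x k) ^ 2
      = (Matrix.of fun i j : Fin m => ∑ l, x l ^ (i + j : ℕ)).det := by
  have hV : (Matrix.of fun i j : Fin m => ∑ l, x l ^ (i + j : ℕ))
      = (vandermonde x)ᵀ * vandermonde x :=
    Matrix.ext fun i j => (vandermonde_transpose_mul_vandermonde x i j).symm
  rw [hV, det_mul, det_transpose, det_vandermonde, ← prod_mul_distrib]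
  refine prod_congr rfl fun j _ => ?_
  rw [← prod_mul_distrib]
  exact prod_congr rfl fun k _ => by rw [sub_sq_comm, sq]

theorem prod_prod_Ioi_sub_sq_congr {x y : Fin m → R}
    (h : Multiset.map x univ.val = Multiset.map y univ.val) :
    ∏ j, ∏ k ∈ Ioi j, (x j - x k) ^ 2 = ∏ j, ∏ k ∈ Ioi j, (y j - y k) ^ 2 := by
  have hpow (p : ℕ) : ∑ l, x l ^ p = ∑ l, y l ^ p := by
    simpa only [Multiset.map_map, Function.comp_def, ← sum_eq_multiset_sum] using
      congrArg (fun s => (s.map (· ^ p)).sum) h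
  simp only [prod_prod_Ioi_sub_sq_eq_det, hpow]

end Discriminant

theorem multiset_map_eq_of_prod_sub_eq {R ι : Type*} [CommRing R] [IsDomain R] [Infinite R]
    [Fintype ι] {x y : ι → R} (h : ∀ X, ∏ j, (X - x j) = ∏ j, (X - y j)) :
    Multiset.map x univ.val = Multiset.map y univ.val := by
  have hroots (z : ι → R) : (∏ j, (X - C (z j))).roots = Multiset.map z univ.val := by
    rw [roots_prod _ _ (prod_ne_zero_iff.2 fun j _ => X_sub_C_ne_zero (z j))]
    simp
  rw [← hroots x, ← hroots y]
  congr 1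
  exact Polynomial.funext fun r => by simpa [eval_prod] using h r

theorem prod_pow_mul_prod_prod_Ioi_sub_sq_of_prod_linear {K : Type*} [Field K] [Infinite K]
    {n : ℕ} {a b x : Fin (n + 1) → K} (ha : ∀ j, a j ≠ 0)
    (h : ∀ X, (∏ j, a j) * ∏ j, (X - x j) = ∏ j, (a j * X - b j)) :
    (∏ j, a j) ^ (2 * n) * ∏ j, ∏ k ∈ Ioi j, (x j - x k) ^ 2
      = ∏ j, ∏ k ∈ Ioi j, (a k * b j - a j * b k) ^ 2 := by
  have hroots : Multiset.map x univ.val = Multiset.map (fun j => b j / a j) univ.val := by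
    refine multiset_map_eq_of_prod_sub_eq fun X =>
      mul_left_cancel₀ (prod_ne_zero_iff.2 fun j _ => ha j : ∏ j, a j ≠ 0) ?_
    rw [h, ← prod_mul_distrib]
    exact prod_congr rfl fun j _ => by field_simp [ha j]
  rw [prod_prod_Ioi_sub_sq_congr hroots, pow_mul, ← prod_pow,
    ← prod_prod_Ioi_mul_eq_pow, ← prod_mul_distrib]
  refine prod_congr rfl fun j _ => ?_
  rw [← prod_mul_distrib]
  exact prod_congr rfl fun k _ => by field_simp [ha j, ha k]

theorem det_sum_zpow_sub_mul_prod_pow {K : Type*} [Field K] {n : ℕ} {t : Fin (n + 1) → K}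
    (ht : ∀ j, t j ≠ 0) :
    (Matrix.of fun j k : Fin (n + 1) => ∑ l, t l ^ ((j : ℤ) - (k : ℤ))).det * (∏ j, t j) ^ n
      = ∏ j, ∏ k ∈ Ioi j, -(t j - t k) ^ 2 := by
  have hH : (Matrix.of fun j k : Fin (n + 1) => ∑ l, t l ^ ((j : ℤ) - (k : ℤ)))
      = (vandermonde t)ᵀ * vandermonde fun l => (t l)⁻¹ := by
    ext j k
    simp only [of_apply, mul_apply, transpose_apply, vandermonde_apply]
    exact sum_congr rfl fun l _ => by
      rw [zpow_sub₀ (ht l), zpow_natCast, zpow_natCast, div_eq_mul_inv, inv_pow]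
  rw [hH, det_mul, det_transpose, det_vandermonde, det_vandermonde,
    ← prod_prod_Ioi_mul_eq_pow, ← prod_mul_distrib, ← prod_mul_distrib]
  refine prod_congr rfl fun j _ => ?_
  rw [← prod_mul_distrib, ← prod_mul_distrib]
  exact prod_congr rfl fun k _ => by field_simp [ht j, ht k]; ring

/-- Theorem 2.9: for `f̃(T,U) = Π (T - tⱼU)` with `Π tⱼ = 1`, real image
`g̃(X,Y) = f̃(i(X+iY), i(X-iY)) = Σ cⱼ X^{n+1-j} Y^j` with `c₀ ≠ 0` and roots `xⱼ` of
`g̃(X,1)`, the discriminant `Dis(g̃(X,1)) = c₀^{2n} Π_{j<k} (xⱼ-xₖ)²` equals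
`2^{n(n+1)} det H_n` where `H_n = (h_{j-k})`, `h_m = Σ tⱼ^m`. -/
theorem stmt13 (n : ℕ) (t : Fin (n + 1) → ℂ) (ht : ∏ j, t j = 1)
    (c : Fin (n + 2) → ℝ)
    (hfg : ∀ X Y : ℂ,
      ∏ j, (Complex.I * (X + Complex.I * Y) - t j * (Complex.I * (X - Complex.I * Y)))
        = ∑ j : Fin (n + 2), (c j : ℂ) * X ^ (n + 1 - (j : ℕ)) * Y ^ (j : ℕ))
    (hc0 : c 0 ≠ 0)
    (x : Fin (n + 1) → ℂ)
    (hx : ∀ X : ℂ, (∑ j : Fin (n + 2), (c j : ℂ) * X ^ (n + 1 - (j : ℕ)))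
      = (c 0 : ℂ) * ∏ j, (X - x j)) :
    (c 0 : ℂ) ^ (2 * n) * ∏ j : Fin (n + 1), ∏ k ∈ Finset.Ioi j, (x j - x k) ^ 2
      = 2 ^ (n * (n + 1)) *
        (Matrix.of fun j k : Fin (n + 1) => ∑ l, t l ^ ((j : ℤ) - (k : ℤ))).det := by
  have ht0 (j : Fin (n + 1)) : t j ≠ 0 := prod_ne_zero_iff.1 (ht ▸ one_ne_zero) j (mem_univ j)
  have hc0a : (c 0 : ℂ) = ∏ j, (1 - t j) * I := by
    simpa [Fin.sum_univ_succ, sub_mul, mul_comm I] using (hfg 1 0).symm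
  have ha (j : Fin (n + 1)) : (1 - t j) * I ≠ 0 :=
    prod_ne_zero_iff.1 (hc0a ▸ ofReal_ne_zero.2 hc0) j (mem_univ j)
  have hlin (X : ℂ) :
      (∏ j, (1 - t j) * I) * ∏ j, (X - x j) = ∏ j, ((1 - t j) * I * X - (1 + t j)) := by
    have h := hfg X 1
    simp only [mul_one, one_pow] at h
    rw [← hc0a, ← hx X, ← h]
    exact prod_congr rfl fun j _ => by linear_combination (1 + t j) * I_sq
  have hdet := det_sum_zpow_sub_mul_prod_pow ht0
  rw [ht, one_pow, mul_one] at hdet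
  have hpow : (2 : ℂ) ^ (n * (n + 1)) = ∏ j : Fin (n + 1), ∏ _k ∈ Ioi j, 2 * 2 := by
    rw [prod_prod_Ioi_mul_eq_pow (fun _ => (2 : ℂ)), prod_const, card_univ, Fintype.card_fin,
      ← pow_mul, mul_comm]
  rw [hc0a, prod_pow_mul_prod_prod_Ioi_sub_sq_of_prod_linear ha hlin, hdet, hpow,
    ← prod_mul_distrib]
  refine prod_congr rfl fun j _ => ?_
  rw [← prod_mul_distrib]
  exact prod_congr rfl fun k _ => by linear_combination (4 * (t j - t k) ^ 2) * I_sq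
end

section
/- Suppose f̃(T,1) = Π_{j=1}^{n+1}(T - t_j) is a monic self-inversive polynomial with t_1⋯t_{n+1} = 1, all roots distinct, exactly k of which lie on the unit circle, and the corresponding real form g̃ = Φ_n(f̃) has nonzero leading coefficient. Then the sign of det H_n equals (-1)^{(n+1-k)/2}. -/
open Complex Finset Matrix Equiv Function
open scoped ComplexConjugate

/-!
With `V(t)` the Vandermonde matrix and `Δ(t) = det V(t)`, `H_n = V(t)ᵀ V(t⁻¹)`, so
`det H_n = Δ(t) Δ(t⁻¹)`.
Self-inversivity says that `t ↦ (conj t)⁻¹` permutes the roots by an involution `σ` whose fixed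
points are the `k` roots on the unit circle, so `conj Δ(t) = sign σ · Δ(t⁻¹)` and
`det H_n = sign σ · |Δ(t)|²` with `sign σ = (-1)^{(n+1-k)/2}`.
-/

theorem Matrix.of_sum_zpow_sub_eq_vandermonde_mul {K : Type*} [Field K] {m : ℕ}
    {t : Fin m → K} (ht : ∀ l, t l ≠ 0) :
    (Matrix.of fun j k : Fin m => ∑ l, t l ^ ((j : ℤ) - (k : ℤ))) =
      (vandermonde t)ᵀ * vandermonde fun l => (t l)⁻¹ := by
  ext j k
  simp only [of_apply, mul_apply, transpose_apply, vandermonde_apply]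
  refine sum_congr rfl fun l _ => ?_
  rw [zpow_sub₀ (ht l), zpow_natCast, zpow_natCast, div_eq_mul_inv, inv_pow]

theorem Complex.conj_eq_inv_iff_norm_eq_one {z : ℂ} (hz : z ≠ 0) : conj z = z⁻¹ ↔ ‖z‖ = 1 := by
  rw [← mul_eq_one_iff_eq_inv₀ hz, mul_comm, mul_conj', ← ofReal_pow, ofReal_eq_one,
    pow_eq_one_iff_of_nonneg (norm_nonneg z) two_ne_zero]

section SelfInversive

variable {m : ℕ} {t : Fin m → ℂ} {σ : Perm (Fin m)}

theorem sq_eq_one_of_apply_eq_inv_conj (hinj : Injective t)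
    (hσ : ∀ j, t (σ j) = (conj (t j))⁻¹) : σ ^ 2 = 1 := by
  refine Equiv.ext fun j => hinj ?_
  rw [sq, Perm.mul_apply, Perm.one_apply, hσ, hσ, map_inv₀, conj_conj, inv_inv]

theorem apply_eq_self_iff_norm_eq_one_of_apply_eq_inv_conj (hinj : Injective t)
    (hσ : ∀ j, t (σ j) = (conj (t j))⁻¹) {j : Fin m} (hj : t j ≠ 0) :
    σ j = j ↔ ‖t j‖ = 1 := by
  rw [← hinj.eq_iff, hσ, inv_eq_iff_eq_inv, conj_eq_inv_iff_norm_eq_one hj]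

theorem conj_det_vandermonde_of_apply_eq_inv_conj (hσ : ∀ j, t (σ j) = (conj (t j))⁻¹) :
    conj (vandermonde t).det = Perm.sign σ * (vandermonde fun l => (t l)⁻¹).det := by
  have hconj : ∀ j, conj (t j) = (t (σ j))⁻¹ := fun j => by rw [hσ, inv_inv]
  rw [RingHom.map_det, ← det_permute]
  congr 1
  ext i j
  simp [hconj]

theorem det_of_sum_zpow_sub_of_apply_eq_inv_conj (ht : ∀ l, t l ≠ 0)
    (hσ : ∀ j, t (σ j) = (conj (t j))⁻¹) :
    (Matrix.of fun j k : Fin m => ∑ l, t l ^ ((j : ℤ) - (k : ℤ))).det =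
      (((Perm.sign σ : ℤ) : ℝ) * normSq (vandermonde t).det : ℝ) := by
  have hΔ' : (vandermonde fun l => (t l)⁻¹).det = Perm.sign σ * conj (vandermonde t).det := by
    rw [conj_det_vandermonde_of_apply_eq_inv_conj hσ, ← mul_assoc, ← Int.cast_mul, ← Units.val_mul,
      Int.units_mul_self, Units.val_one, Int.cast_one, one_mul]
  rw [of_sum_zpow_sub_eq_vandermonde_mul ht, det_mul, det_transpose, hΔ', mul_left_comm, mul_conj]
  simp

end SelfInversive

/-- Corollary 2.10: if the monic self-inversive polynomial `f̃(T,1) = Π (T - tⱼ)`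
(`Π tⱼ = 1`, roots closed under inversion in the unit circle) has all roots distinct and
exactly `k` of them on the unit circle, then `det H_n` is real with sign
`(-1)^{(n+1-k)/2}`. -/
theorem stmt14 (n k : ℕ) (t : Fin (n + 1) → ℂ) (ht : ∏ j, t j = 1)
    (hinj : Function.Injective t)
    (hsym : ∃ σ : Equiv.Perm (Fin (n + 1)), ∀ j, t (σ j) = (starRingEnd ℂ (t j))⁻¹)
    (hk : Nat.card {j : Fin (n + 1) // ‖t j‖ = 1} = k) :
    ((Matrix.of fun j k' : Fin (n + 1) => ∑ l, t l ^ ((j : ℤ) - (k' : ℤ))).det).im = 0 ∧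
    0 < (-1 : ℝ) ^ ((n + 1 - k) / 2) *
      ((Matrix.of fun j k' : Fin (n + 1) => ∑ l, t l ^ ((j : ℤ) - (k' : ℤ))).det).re := by
  obtain ⟨σ, hσ⟩ := hsym
  have ht0 : ∀ l, t l ≠ 0 := fun l hl => one_ne_zero (ht ▸ prod_eq_zero (mem_univ l) hl)
  have hfix : Fintype.card (fixedPoints σ) = k := by
    rw [← Nat.card_eq_fintype_card, ← hk]
    exact Nat.card_congr <| Equiv.subtypeEquivRight fun j =>
      apply_eq_self_iff_norm_eq_one_of_apply_eq_inv_conj hinj hσ (ht0 j)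
  have hsign : ((Perm.sign σ : ℤ) : ℝ) = (-1) ^ ((n + 1 - k) / 2) := by
    rw [Perm.sign_of_pow_two_eq_one (sq_eq_one_of_apply_eq_inv_conj hinj hσ), Fintype.card_fin,
      hfix]
    simp
  have hΔ : 0 < normSq (vandermonde t).det := normSq_pos.2 (det_vandermonde_ne_zero_iff.2 hinj)
  rw [det_of_sum_zpow_sub_of_apply_eq_inv_conj ht0 hσ, hsign, ofReal_im, ofReal_re, ← mul_assoc,
    ← mul_pow, neg_one_mul, neg_neg, one_pow, one_mul]
  exact ⟨rfl, hΔ⟩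
end

section
/- Let n be even and p̃(T,U) = Π_{j=1}^{n+1}(T - t'_j U) a monic self-reciprocal form in MB_n (coefficients ζ_j with ζ_0 = ζ_{n+1} = 1 and ζ_j = conj(ζ_{n+1-j}), no alternating signs, so Π t'_j = -1). Let q̃(X,Y) = p̃(X+iY, X-iY) = Σ d_j X^{n+1-j}Y^j with d_0 ≠ 0, and define k_m = Σ_j (t'_j)^m and K_n = (k_{j-k})_{0≤j,k≤n}. Then Dis(q̃(X,1)) = 2^{n(n+1)} · det K_n, where Dis(q̃(X,1)) = d_0^{2n} Π_{j<k}(x'_j - x'_k)² over the roots x'_j of q̃(X,1). -/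
open Complex Finset Polynomial
open scoped Matrix

/-! The roots of `q̃(X,1)` are the Cayley transforms `x'ⱼ = i (t'ⱼ + 1) / (t'ⱼ - 1)`, and
`(1 - t'ⱼ)(1 - t'ₖ)(x'ⱼ - x'ₖ) = 2i (t'ₖ - t'ⱼ)`. As `d₀ = Π (1 - t'ⱼ)`, the discriminant is
`Π_{j<k} (2i (t'ₖ - t'ⱼ))²`. On the other side `K_n = V(t')ᵀ V(1/t')` for the Vandermonde matrix
`V`, so `det K_n · (Π t'ⱼ)ⁿ = Π_{j<k} -(t'ₖ - t'ⱼ)²`, and `(Π t'ⱼ)ⁿ = 1` because `n` is even. -/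

lemma prod_prod_Ioi_mul_eq_prod_pow {M : Type*} [CommMonoid M] {m : ℕ} (a : Fin (m + 1) → M) :
    ∏ j, ∏ k ∈ Ioi j, a j * a k = ∏ j, a j ^ m := by
  rw [prod_prod_Ioi_mul_eq_prod_prod_off_diag fun _ k => a k]
  refine prod_congr rfl fun j _ => ?_
  rw [prod_const, card_compl, card_singleton, Fintype.card_fin, Nat.add_sub_cancel]

lemma prod_pow_mul_prod_prod_Ioi_sq {R : Type*} [CommMonoid R] {m : ℕ} (a : Fin (m + 1) → R)
    (b : Fin (m + 1) → Fin (m + 1) → R) :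
    (∏ j, a j) ^ (2 * m) * ∏ j, ∏ k ∈ Ioi j, b j k ^ 2
      = ∏ j, ∏ k ∈ Ioi j, (a j * a k * b j k) ^ 2 := by
  have : ∏ j, ∏ k ∈ Ioi j, a j ^ 2 * a k ^ 2 = (∏ j, a j) ^ (2 * m) := by
    rw [prod_prod_Ioi_mul_eq_prod_pow fun j => a j ^ 2, ← prod_pow]
    simp_rw [← pow_mul]
  simp_rw [mul_pow, prod_mul_distrib] at this ⊢
  rw [this]

lemma sum_comp_eq_of_prod_X_sub_C_eq {R S : Type*} [CommRing R] [IsDomain R] [AddCommMonoid S]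
    {m : ℕ} {v w : Fin m → R} (h : ∏ j, (X - C (v j)) = ∏ j, (X - C (w j))) (f : R → S) :
    ∑ j, f (v j) = ∑ j, f (w j) := by
  have hroots (u : Fin m → R) : (∏ j, (X - C (u j))).roots = univ.val.map u := by
    rw [← roots_multiset_prod_X_sub_C (univ.val.map u), Multiset.map_map]; rfl
  have hmap : univ.val.map v = univ.val.map w := by rw [← hroots, ← hroots, h]
  have hsum := congrArg (fun s => (s.map f).sum) hmap
  simp only [Multiset.map_map] at hsum
  exact hsum

lemma prod_prod_Ioi_sq_sub_eq_of_prod_X_sub_C_eq {R : Type*} [CommRing R] [IsDomain R] {m : ℕ}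
    {v w : Fin m → R} (h : ∏ j, (X - C (v j)) = ∏ j, (X - C (w j))) :
    ∏ j, ∏ k ∈ Ioi j, (v j - v k) ^ 2 = ∏ j, ∏ k ∈ Ioi j, (w j - w k) ^ 2 := by
  -- `Vᵀ V` is the Hankel matrix of power sums, which only sees the multiset of roots.
  have hsq (u : Fin m → R) :
      ∏ j, ∏ k ∈ Ioi j, (u j - u k) ^ 2 = ((Matrix.vandermonde u)ᵀ * Matrix.vandermonde u).det := by
    rw [Matrix.det_mul, Matrix.det_transpose, Matrix.det_vandermonde, ← prod_mul_distrib]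
    exact prod_congr rfl fun j _ => by
      rw [← prod_mul_distrib]; exact prod_congr rfl fun k _ => by ring
  rw [hsq, hsq]
  congr 1
  ext i j
  simp only [Matrix.vandermonde_transpose_mul_vandermonde]
  exact sum_comp_eq_of_prod_X_sub_C_eq h _

lemma det_sum_zpow_sub_eq {K : Type*} [Field K] {m : ℕ} {t : Fin m → K} (ht : ∀ l, t l ≠ 0) :
    (Matrix.of fun j k : Fin m => ∑ l, t l ^ ((j : ℤ) - (k : ℤ))).det
      = ∏ j, ∏ k ∈ Ioi j, (t k - t j) * ((t k)⁻¹ - (t j)⁻¹) := by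
  have : (Matrix.of fun j k : Fin m => ∑ l, t l ^ ((j : ℤ) - (k : ℤ)))
      = (Matrix.vandermonde t)ᵀ * Matrix.vandermonde fun l => (t l)⁻¹ := by
    ext j k
    simp only [Matrix.of_apply, Matrix.mul_apply, Matrix.transpose_apply, Matrix.vandermonde_apply,
      zpow_sub₀ (ht _), zpow_natCast, div_eq_mul_inv, inv_pow]
  rw [this, Matrix.det_mul, Matrix.det_transpose, Matrix.det_vandermonde, Matrix.det_vandermonde,
    ← prod_mul_distrib]
  exact prod_congr rfl fun j _ => prod_mul_distrib.symm

noncomputable def cayley (t : ℂ) : ℂ := I * (t + 1) / (t - 1)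

lemma add_I_sub_mul_sub_I {t : ℂ} (ht : t ≠ 1) (X : ℂ) :
    X + I - t * (X - I) = (1 - t) * (X - cayley t) := by
  have : t - 1 ≠ 0 := sub_ne_zero.mpr ht
  rw [cayley]; field_simp; ring

lemma cayley_sub_cayley {t s : ℂ} (ht : t ≠ 1) (hs : s ≠ 1) :
    (1 - t) * (1 - s) * (cayley t - cayley s) = 2 * I * (s - t) := by
  have : t - 1 ≠ 0 := sub_ne_zero.mpr ht
  have : s - 1 ≠ 0 := sub_ne_zero.mpr hs
  rw [cayley, cayley]; field_simp; ring

lemma sq_mul_cayley_sub_cayley {t s : ℂ} (ht₀ : t ≠ 0) (hs₀ : s ≠ 0) (ht : t ≠ 1) (hs : s ≠ 1) :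
    ((1 - t) * (1 - s) * (cayley t - cayley s)) ^ 2
      = 2 * 2 * ((s - t) * (s⁻¹ - t⁻¹) * (t * s)) := by
  rw [cayley_sub_cayley ht hs, mul_pow, mul_pow, I_sq]
  field_simp
  ring

/-- Theorem 2.12: for even `n` and a monic self-reciprocal form
`p̃(T,U) = Π (T - t'ⱼU)` (`Π t'ⱼ = -1`), whose image
`q̃(X,Y) = p̃(X+iY, X-iY) = Σ dⱼ X^{n+1-j} Y^j` has real coefficients with `d₀ ≠ 0` and
roots `x'ⱼ` of `q̃(X,1)`, the discriminant `d₀^{2n} Π_{j<k} (x'ⱼ-x'ₖ)²` equals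
`2^{n(n+1)} det K_n` where `K_n = (k_{j-k})`, `k_m = Σ (t'ⱼ)^m`. -/
theorem stmt16 (n : ℕ) (hn : Even n) (t : Fin (n + 1) → ℂ) (ht : ∏ j, t j = -1)
    (d : Fin (n + 2) → ℝ)
    (hpq : ∀ X Y : ℂ,
      ∏ j, ((X + Complex.I * Y) - t j * (X - Complex.I * Y))
        = ∑ j : Fin (n + 2), (d j : ℂ) * X ^ (n + 1 - (j : ℕ)) * Y ^ (j : ℕ))
    (hd0 : d 0 ≠ 0)
    (x : Fin (n + 1) → ℂ)
    (hx : ∀ X : ℂ, (∑ j : Fin (n + 2), (d j : ℂ) * X ^ (n + 1 - (j : ℕ)))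
      = (d 0 : ℂ) * ∏ j, (X - x j)) :
    (d 0 : ℂ) ^ (2 * n) * ∏ j : Fin (n + 1), ∏ k ∈ Finset.Ioi j, (x j - x k) ^ 2
      = 2 ^ (n * (n + 1)) *
        (Matrix.of fun j k : Fin (n + 1) => ∑ l, t l ^ ((j : ℤ) - (k : ℤ))).det := by
  have ht0 (l : Fin (n + 1)) : t l ≠ 0 := fun h => by
    simp [prod_eq_zero (mem_univ l) h] at ht
  have hd : (d 0 : ℂ) = ∏ j, (1 - t j) := by
    simpa [Fin.sum_univ_succ] using (hpq 1 0).symm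
  have ht1 (j : Fin (n + 1)) : t j ≠ 1 := fun h => by
    have : (d 0 : ℂ) = 0 := hd ▸ prod_eq_zero (mem_univ j) (by rw [h, sub_self])
    exact hd0 (mod_cast this)
  have hroots : ∏ j, (X - C (cayley (t j))) = ∏ j, (X - C (x j)) := by
    refine Polynomial.funext fun z => ?_
    have h := hpq z 1
    simp only [mul_one, one_pow, hx, add_I_sub_mul_sub_I (ht1 _), prod_mul_distrib, ← hd] at h
    simpa [eval_prod] using mul_left_cancel₀ (ofReal_ne_zero.mpr hd0) h
  calc (d 0 : ℂ) ^ (2 * n) * ∏ j, ∏ k ∈ Ioi j, (x j - x k) ^ 2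
      = ∏ j, ∏ k ∈ Ioi j, ((1 - t j) * (1 - t k) * (cayley (t j) - cayley (t k))) ^ 2 := by
        rw [← prod_prod_Ioi_sq_sub_eq_of_prod_X_sub_C_eq hroots, hd,
          prod_pow_mul_prod_prod_Ioi_sq]
    -- `4` is kept as `2 * 2` so that `prod_prod_Ioi_mul_eq_prod_pow` turns it into `2 ^ (n (n + 1))`.
    _ = ∏ j, ∏ k ∈ Ioi j, 2 * 2 * ((t k - t j) * ((t k)⁻¹ - (t j)⁻¹) * (t j * t k)) :=
        prod_congr rfl fun j _ => prod_congr rfl fun k _ =>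
          sq_mul_cayley_sub_cayley (ht0 j) (ht0 k) (ht1 j) (ht1 k)
    _ = (∏ j, ∏ k ∈ Ioi j, 2 * 2) * (Matrix.of fun j k : Fin (n + 1) =>
          ∑ l, t l ^ ((j : ℤ) - (k : ℤ))).det * ∏ j, ∏ k ∈ Ioi j, t j * t k := by
        rw [det_sum_zpow_sub_eq ht0, ← prod_mul_distrib, ← prod_mul_distrib]
        refine prod_congr rfl fun j _ => ?_
        rw [← prod_mul_distrib, ← prod_mul_distrib]
        simp only [mul_assoc]
    _ = _ := by
        rw [prod_prod_Ioi_mul_eq_prod_pow, prod_prod_Ioi_mul_eq_prod_pow,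
          prod_pow univ n t, ht, hn.neg_one_pow, mul_one, prod_const, card_univ, Fintype.card_fin,
          ← pow_mul]
end
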